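/- Let Φ and φ denote the standard normal CDF and density. For z → ∞ and δ₁ = δ₁(z) ∈ (0,1) with δ₁ = (1-Φ(z))^{1/8}, we have z^{δ₁} (1 - Φ(z√(1-δ₁))) / (1 - Φ(z))^{1-δ₁} → 1 as z → ∞. -/

import Mathlib

open MeasureTheory ProbabilityTheory Filter Real

/-- Standard normal CDF. -/
noncomputable def Phi : ℝ → ℝ := fun x => ProbabilityTheory.cdf (gaussianReal 0 1) x

/-- Standard normal quantile function. -/
noncomputable def PhiInv : ℝ → ℝ := fun q => sInf {x | q ≤ Phi x}

/-! Write `1 - Φ x = r x * (φ x / x)`. Integrating the derivatives of `-φ t` and `-φ t / t` over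
`(x, ∞)` gives the Mills bounds `(1 + x⁻²)⁻¹ ≤ r x ≤ 1`, so `r x → 1`. With `w = z √(1 - δ)`
the Gaussian exponents cancel exactly:
`z ^ δ (φ w / w) / (φ z / z) ^ (1 - δ) = (2π) ^ (-δ/2) / √(1 - δ)`,
so the quantity is this factor times `r w / r z ^ (1 - δ)`, and it tends to `1` for any `δ → 0`. -/

open Set Topology

noncomputable def phi (x : ℝ) : ℝ := (√(2 * π))⁻¹ * exp (-x ^ 2 / 2)

lemma phi_pos (x : ℝ) : 0 < phi x := by unfold phi; positivity

lemma hasDerivAt_phi (x : ℝ) : HasDerivAt phi (-x * phi x) x := by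
  have h : HasDerivAt (fun t : ℝ => -t ^ 2 / 2) (-x) x :=
    ((hasDerivAt_pow 2 x).fun_neg.div_const 2).congr_deriv (by push_cast; ring)
  exact (h.exp.const_mul (√(2 * π))⁻¹).congr_deriv (by rw [phi]; ring)

lemma integrable_phi : Integrable phi := by
  convert (integrable_exp_neg_mul_sq (by norm_num : (0 : ℝ) < 1 / 2)).const_mul (√(2 * π))⁻¹
    using 2 with x
  unfold phi; ring_nf

lemma tendsto_phi_atTop : Tendsto phi atTop (𝓝 0) := by
  have h : Tendsto (fun x : ℝ => -x ^ 2 / 2) atTop atBot :=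
    (tendsto_neg_atBot_iff.mpr (tendsto_pow_atTop two_ne_zero)).atBot_div_const two_pos
  have := (tendsto_exp_atBot.comp h).const_mul (√(2 * π))⁻¹
  rwa [mul_zero] at this

lemma one_sub_Phi_nonneg (x : ℝ) : 0 ≤ 1 - Phi x := sub_nonneg.mpr (cdf_le_one _ x)

lemma tendsto_one_sub_Phi_atTop : Tendsto (fun z => 1 - Phi z) atTop (𝓝 0) := by
  simpa [Phi] using tendsto_const_nhds.sub (tendsto_cdf_atTop (gaussianReal 0 1)) (a := (1 : ℝ))

lemma one_sub_Phi_eq_integral (x : ℝ) : 1 - Phi x = ∫ t in Ioi x, phi t := by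
  have hpdf : gaussianPDFReal 0 1 = phi := by
    ext t; simp [gaussianPDFReal, phi]
  rw [Phi, cdf_eq_real, ← probReal_compl_eq_one_sub measurableSet_Iic, compl_Iic,
    measureReal_def, gaussianReal_apply_eq_integral 0 one_ne_zero, hpdf,
    ENNReal.toReal_ofReal (setIntegral_nonneg measurableSet_Ioi fun t _ => (phi_pos t).le)]

lemma one_sub_Phi_le_phi_div {x : ℝ} (hx : 0 < x) : 1 - Phi x ≤ phi x / x := by
  have hderiv : ∀ t ∈ Ici x, HasDerivAt (fun t => -phi t) (t * phi t) t := fun t _ => by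
    simpa using (hasDerivAt_phi t).fun_neg
  have hnonneg : ∀ t ∈ Ioi x, 0 ≤ t * phi t := fun t ht =>
    mul_nonneg (hx.trans ht).le (phi_pos t).le
  have hlim : Tendsto (fun t => -phi t) atTop (𝓝 0) := by simpa using tendsto_phi_atTop.neg
  have hint := integrableOn_Ioi_deriv_of_nonneg' hderiv hnonneg hlim
  calc 1 - Phi x = ∫ t in Ioi x, phi t := one_sub_Phi_eq_integral x
    _ ≤ ∫ t in Ioi x, t * phi t / x := by
      refine setIntegral_mono_on integrable_phi.integrableOn (hint.div_const x)
        measurableSet_Ioi fun t ht => ?_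
      rw [le_div_iff₀ hx]
      exact mul_le_mul_of_nonneg_left (le_of_lt ht) (phi_pos t).le |>.trans_eq (mul_comm _ _)
    _ = phi x / x := by
      rw [integral_div, integral_Ioi_of_hasDerivAt_of_nonneg' hderiv hnonneg hlim]
      ring

lemma phi_div_le_mul_one_sub_Phi {x : ℝ} (hx : 0 < x) :
    phi x / x ≤ (1 + (x ^ 2)⁻¹) * (1 - Phi x) := by
  have hderiv : ∀ t ∈ Ici x, HasDerivAt (fun t => -(phi t / t)) (phi t * (1 + (t ^ 2)⁻¹)) t :=
    fun t ht => by
      have ht0 : t ≠ 0 := (hx.trans_le ht).ne'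
      refine ((hasDerivAt_phi t).div (hasDerivAt_id t) ht0).neg.congr_deriv ?_
      simp only [id]
      field_simp
      ring
  have hnonneg : ∀ t ∈ Ioi x, 0 ≤ phi t * (1 + (t ^ 2)⁻¹) := fun t _ => by
    have := phi_pos t; positivity
  have hlim : Tendsto (fun t => -(phi t / t)) atTop (𝓝 0) := by
    simpa using (tendsto_phi_atTop.div_atTop tendsto_id).neg
  calc phi x / x = ∫ t in Ioi x, phi t * (1 + (t ^ 2)⁻¹) := by
        rw [integral_Ioi_of_hasDerivAt_of_nonneg' hderiv hnonneg hlim]; ring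
    _ ≤ ∫ t in Ioi x, (1 + (x ^ 2)⁻¹) * phi t := by
      refine setIntegral_mono_on (integrableOn_Ioi_deriv_of_nonneg' hderiv hnonneg hlim)
        (integrable_phi.integrableOn.const_mul _) measurableSet_Ioi fun t ht => ?_
      have : (t ^ 2)⁻¹ ≤ (x ^ 2)⁻¹ :=
        inv_anti₀ (by positivity) (pow_le_pow_left₀ hx.le (le_of_lt ht) 2)
      rw [mul_comm]
      gcongr
      exact (phi_pos t).le
    _ = (1 + (x ^ 2)⁻¹) * (1 - Phi x) := by rw [integral_const_mul, one_sub_Phi_eq_integral]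

lemma tendsto_one_sub_Phi_div_phi_div :
    Tendsto (fun x => (1 - Phi x) / (phi x / x)) atTop (𝓝 1) := by
  have hlower : Tendsto (fun x : ℝ => (1 + (x ^ 2)⁻¹)⁻¹) atTop (𝓝 1) := by
    simpa using ((tendsto_inv_atTop_zero.comp (tendsto_pow_atTop two_ne_zero)).const_add
      (1 : ℝ)).inv₀ (by norm_num)
  refine tendsto_of_tendsto_of_tendsto_of_le_of_le' hlower tendsto_const_nhds ?_ ?_ <;>
    filter_upwards [eventually_gt_atTop 0] with x hx <;>
    have hpos : 0 < phi x / x := div_pos (phi_pos x) hx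
  · rw [le_div_iff₀ hpos, inv_mul_le_iff₀ (by positivity)]
    exact phi_div_le_mul_one_sub_Phi hx
  · exact div_le_one_of_le₀ (one_sub_Phi_le_phi_div hx) hpos.le

lemma rpow_mul_phi_div_rpow {z δ : ℝ} (hz : 0 < z) (hδ : δ < 1) :
    z ^ δ * (phi (z * √(1 - δ)) / (z * √(1 - δ))) / (phi z / z) ^ (1 - δ)
      = (√(2 * π))⁻¹ ^ δ / √(1 - δ) := by
  set c := (√(2 * π))⁻¹
  have hc : 0 < c := by positivity
  have hs : 0 < √(1 - δ) := sqrt_pos.mpr (by linarith)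
  have hsplit : ∀ a : ℝ, 0 < a → a = a ^ δ * a ^ (1 - δ) := fun a ha => by
    rw [← rpow_add ha, add_sub_cancel, rpow_one]
  have hphi : phi (z * √(1 - δ)) = c * exp (-z ^ 2 / 2) ^ (1 - δ) := by
    rw [phi, mul_pow, sq_sqrt (by linarith), ← exp_mul]
    congr 2
    ring
  have hpow :
      (phi z / z) ^ (1 - δ) = c ^ (1 - δ) * exp (-z ^ 2 / 2) ^ (1 - δ) / z ^ (1 - δ) := by
    rw [phi, div_rpow (by positivity) hz.le, mul_rpow hc.le (exp_pos _).le]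
  have := rpow_pos_of_pos hc (1 - δ)
  have := rpow_pos_of_pos hz (1 - δ)
  have := rpow_pos_of_pos (exp_pos (-z ^ 2 / 2)) (1 - δ)
  rw [hphi, hpow, div_eq_div_iff (by positivity) hs.ne']
  field_simp
  linear_combination z * hsplit c hc - c * hsplit z hz

theorem tendsto_rpow_mul_one_sub_Phi_div_rpow {δ : ℝ → ℝ} (hδ : Tendsto δ atTop (𝓝 0)) :
    Tendsto (fun z => z ^ δ z * (1 - Phi (z * √(1 - δ z))) / (1 - Phi z) ^ (1 - δ z))
      atTop (𝓝 1) := by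
  set r := fun x => (1 - Phi x) / (phi x / x)
  have hδ' : Tendsto (fun z => 1 - δ z) atTop (𝓝 1) := by
    simpa using tendsto_const_nhds.sub hδ
  have hsqrt : Tendsto (fun z => √(1 - δ z)) atTop (𝓝 1) := by simpa using hδ'.sqrt
  have hw : Tendsto (fun z => z * √(1 - δ z)) atTop atTop :=
    tendsto_id.atTop_mul_pos one_pos hsqrt
  have hconst : Tendsto (fun z => (√(2 * π))⁻¹ ^ δ z) atTop (𝓝 1) := by
    simpa using tendsto_const_nhds.rpow hδ (Or.inl (by positivity))
  have hrz : Tendsto (fun z => r z ^ (1 - δ z)) atTop (𝓝 1) := by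
    simpa using tendsto_one_sub_Phi_div_phi_div.rpow hδ' (Or.inl one_ne_zero)
  have hlim := ((hconst.div hsqrt one_ne_zero).mul
    (tendsto_one_sub_Phi_div_phi_div.comp hw)).div hrz one_ne_zero
  rw [one_div_one, one_mul, one_div_one] at hlim
  refine hlim.congr' ?_
  filter_upwards [eventually_gt_atTop 0, hδ.eventually_lt_const zero_lt_one] with z hz hδz
  have hs : 0 < √(1 - δ z) := sqrt_pos.mpr (by linarith)
  have hw0 : 0 < z * √(1 - δ z) := mul_pos hz hs
  simp only [Pi.div_apply, Function.comp_apply, r]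
  rw [← rpow_mul_phi_div_rpow hz hδz, div_rpow (one_sub_Phi_nonneg z) (div_pos (phi_pos z) hz).le]
  have := phi_pos (z * √(1 - δ z))
  have := rpow_pos_of_pos (div_pos (phi_pos z) hz) (1 - δ z)
  field_simp

theorem stmt2 :
    Tendsto (fun z : ℝ =>
        z ^ ((1 - Phi z) ^ (8⁻¹ : ℝ))
          * (1 - Phi (z * Real.sqrt (1 - (1 - Phi z) ^ (8⁻¹ : ℝ))))
          / (1 - Phi z) ^ (1 - (1 - Phi z) ^ (8⁻¹ : ℝ)))
      atTop (nhds 1) := by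
  refine tendsto_rpow_mul_one_sub_Phi_div_rpow ?_
  simpa using tendsto_one_sub_Phi_atTop.rpow_const (p := 8⁻¹) (Or.inr (by norm_num))
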